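/- Suppose φ : ℝⁿ → (0,∞) satisfies -ln(φ(x)) ≤ √2·∫₀^{|x|} Q(t)^{1/2} dt + C for all x, where Q : [0,∞) → (0,∞) is monotone increasing and there exist R > 0, d ∈ (0,1), k > 0, m ∈ ℕ such that q(x) ≥ d·(∫₀^{|x|} Q(t)^{1/2} dt)·(ln^(m)(∫₀^{|x|} Q(t)^{1/2} dt))^k for all |x| ≥ R, and φ is continuous and strictly positive on the closed ball of radius R. Then φ satisfies Rosen inequalities: for every ε > 0 there exists γ(ε) > 0 such that -ln(φ(x)) ≤ ε·q(x) + γ(ε) for almost every x ∈ ℝⁿ. -/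
import Mathlib


open Set MeasureTheory

lemma tendsto_log_iter (m : ℕ) :
    Filter.Tendsto (Real.log^[m]) Filter.atTop Filter.atTop := by
  induction m with
  | zero => simpa using Filter.tendsto_id
  | succ m ih =>
      rw [Function.iterate_succ']
      exact Real.tendsto_log_atTop.comp ih

/-- Rosen inequalities for the ground state: if `-ln φ(x) ≤ √2 ∫₀^{|x|} Q^{1/2} + C`
and `q(x) ≥ d (∫₀^{|x|} Q^{1/2}) (ln^(m)(∫₀^{|x|} Q^{1/2}))^k` for `|x| ≥ R`,
then for every `ε > 0` there is `γ(ε) > 0` with `-ln φ(x) ≤ ε q(x) + γ(ε)` a.e. -/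
theorem rosen_inequalities (n : ℕ)
    (φ q : EuclideanSpace ℝ (Fin n) → ℝ) (Q : ℝ → ℝ)
    (hφ_pos : ∀ x, 0 < φ x) (hφ_cont : Continuous φ)
    (hq_cont : Continuous q) (hq_nonneg : ∀ x, 0 ≤ q x)
    (hQ_pos : ∀ t ∈ Ici (0 : ℝ), 0 < Q t) (hQ_mono : MonotoneOn Q (Ici 0))
    (C : ℝ)
    (hφ_bound : ∀ x, -Real.log (φ x) ≤
      Real.sqrt 2 * (∫ t in (0 : ℝ)..‖x‖, (Q t) ^ (1/2 : ℝ)) + C)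
    (R d k : ℝ) (m : ℕ) (hR : 0 < R) (hd0 : 0 < d) (hd1 : d < 1) (hk : 0 < k)
    (hq_low : ∀ x, R ≤ ‖x‖ →
      d * (∫ t in (0 : ℝ)..‖x‖, (Q t) ^ (1/2 : ℝ)) *
        (Real.log^[m] (∫ t in (0 : ℝ)..‖x‖, (Q t) ^ (1/2 : ℝ))) ^ k ≤ q x) :
    ∀ ε > (0 : ℝ), ∃ γ > (0 : ℝ),
      ∀ᵐ x : EuclideanSpace ℝ (Fin n) ∂volume,
        -Real.log (φ x) ≤ ε * q x + γ := by
  intro ε hε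
  set I : EuclideanSpace ℝ (Fin n) → ℝ :=
    fun x => ∫ t in (0 : ℝ)..‖x‖, (Q t) ^ (1/2 : ℝ) with hI
  have hc0 : 0 < (Q 0) ^ (1/2 : ℝ) := Real.rpow_pos_of_pos (hQ_pos 0 Set.self_mem_Ici) _
  set c : ℝ := (Q 0) ^ (1/2 : ℝ) with hcdef
  -- lower bound on the integral
  have hI_lb : ∀ x : EuclideanSpace ℝ (Fin n), c * ‖x‖ ≤ I x := by
    intro x
    have hnn : (0 : ℝ) ≤ ‖x‖ := norm_nonneg x
    have hmono : MonotoneOn (fun t => (Q t) ^ (1/2 : ℝ)) (Set.uIcc 0 ‖x‖) := by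
      rw [Set.uIcc_of_le hnn]
      intro a ha b hb hab
      exact Real.rpow_le_rpow (hQ_pos a (Set.mem_Ici.mpr ha.1)).le (hQ_mono (Set.mem_Ici.mpr ha.1) (Set.mem_Ici.mpr hb.1) hab) (by norm_num)
    have hint : IntervalIntegrable (fun t => (Q t) ^ (1/2 : ℝ)) volume 0 ‖x‖ :=
      hmono.intervalIntegrable
    have hle := intervalIntegral.integral_mono_on hnn
      (intervalIntegrable_const (c := c)) hint
      (fun t ht => Real.rpow_le_rpow (hQ_pos 0 Set.self_mem_Ici).le (hQ_mono Set.self_mem_Ici (Set.mem_Ici.mpr ht.1) ht.1)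
        (by norm_num))
    simpa [intervalIntegral.integral_const, smul_eq_mul, mul_comm, hI, one_div] using hle
  -- threshold from iterated logarithm
  set A : ℝ := max 1 ((Real.sqrt 2 / (ε * d)) ^ (1/k : ℝ)) with hA
  obtain ⟨T₀, hT₀⟩ := Filter.eventually_atTop.mp
    ((tendsto_log_iter m).eventually_ge_atTop A)
  set T : ℝ := max T₀ 1 with hT
  set R' : ℝ := max R (T / c) with hR'
  -- bound on the ball
  have hcontinuous : Continuous fun x : EuclideanSpace ℝ (Fin n) => -Real.log (φ x) :=
    (hφ_cont.log fun x => (hφ_pos x).ne').neg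
  have hR'0 : 0 < R' := lt_of_lt_of_le hR (le_max_left _ _)
  obtain ⟨x₀, _, hx₀⟩ :=
    (isCompact_closedBall (0 : EuclideanSpace ℝ (Fin n)) R').exists_isMaxOn
      (Metric.nonempty_closedBall.mpr hR'0.le) hcontinuous.continuousOn
  set B : ℝ := -Real.log (φ x₀) with hB
  refine ⟨max 0 (max C B) + 1, by positivity, Filter.Eventually.of_forall fun x => ?_⟩
  by_cases hx : ‖x‖ ≤ R'
  · have hxb : x ∈ Metric.closedBall (0 : EuclideanSpace ℝ (Fin n)) R' := by
      simpa [Metric.mem_closedBall, dist_zero_right] using hx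
    have h1 : -Real.log (φ x) ≤ B := hx₀ hxb
    have h2 : B ≤ max 0 (max C B) := le_trans (le_max_right C B) (le_max_right _ _)
    have h3 : (0 : ℝ) ≤ ε * q x := mul_nonneg hε.le (hq_nonneg x)
    linarith
  · push_neg at hx
    have hxR : R ≤ ‖x‖ := le_trans (le_max_left _ _) hx.le
    have hIT : T ≤ I x := by
      have h1 : T / c ≤ ‖x‖ := le_trans (le_max_right _ _) hx.le
      have h2 : c * (T / c) ≤ c * ‖x‖ := by
        exact mul_le_mul_of_nonneg_left h1 hc0.le
      have h3 : c * (T / c) = T := by field_simp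
      linarith [hI_lb x]
    have hI1 : (1 : ℝ) ≤ I x := le_trans (le_max_right T₀ 1) hIT
    have hIpos : (0 : ℝ) ≤ I x := by linarith
    have hL : A ≤ Real.log^[m] (I x) := hT₀ (I x) (le_trans (le_max_left _ _) hIT)
    have hA1 : (1 : ℝ) ≤ A := le_max_left _ _
    -- (log^[m] I)^k ≥ √2 / (ε d)
    have hbase : (0 : ℝ) ≤ Real.sqrt 2 / (ε * d) := by positivity
    have hAk : Real.sqrt 2 / (ε * d) ≤ A ^ k := by
      have h1 : ((Real.sqrt 2 / (ε * d)) ^ (1/k : ℝ)) ^ k = Real.sqrt 2 / (ε * d) := by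
        rw [← Real.rpow_mul hbase, one_div_mul_cancel hk.ne', Real.rpow_one]
      calc Real.sqrt 2 / (ε * d)
          = ((Real.sqrt 2 / (ε * d)) ^ (1/k : ℝ)) ^ k := h1.symm
        _ ≤ A ^ k := Real.rpow_le_rpow (Real.rpow_nonneg hbase _) (le_max_right _ _) hk.le
    have hLk : Real.sqrt 2 / (ε * d) ≤ (Real.log^[m] (I x)) ^ k :=
      hAk.trans (Real.rpow_le_rpow (by linarith) hL hk.le)
    have hsqrt : Real.sqrt 2 ≤ ε * d * (Real.log^[m] (I x)) ^ k := by
      rw [div_le_iff₀ (by positivity)] at hLk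
      linarith [hLk]
    have hmain : Real.sqrt 2 * I x ≤ ε * q x := by
      have hq := hq_low x hxR
      have h1 : Real.sqrt 2 * I x ≤ (ε * d * (Real.log^[m] (I x)) ^ k) * I x :=
        mul_le_mul_of_nonneg_right hsqrt (by linarith)
      have h2 : (ε * d * (Real.log^[m] (I x)) ^ k) * I x
          = ε * (d * I x * (Real.log^[m] (I x)) ^ k) := by ring
      have h3 : ε * (d * I x * (Real.log^[m] (I x)) ^ k) ≤ ε * q x :=
        mul_le_mul_of_nonneg_left hq hε.le
      linarith
    have h4 : C ≤ max 0 (max C B) := le_trans (le_max_left C B) (le_max_right _ _)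
    have := hφ_bound x
    linarith
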